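/- arXiv:1810.05620 — 4 statements merged into one kernel-verified Lean document; each statement's English description precedes it below -/
import Mathlib

section
/- Let h ⊆ ℚ[z_1,…,z_n] be a finite set of polynomials and 1 ≤ i < n. If the elimination ideal ⟨h⟩ ∩ ℚ[z_1,…,z_{i+1}] is principal, generated by q with deg(q, z_{i+1}) > 0, and √⟨q⟩ = ⟨g⟩, then for every point b in ℂ^i, the vanishing sets of q(b,·) and g(b,·) in ℂ^{n−i} are equal, and hence √⟨q(b)⟩ = √⟨g(b)⟩ as ideals of ℂ[z_{i+1},…,z_n]. -/
open MvPolynomial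

/-- Specialization of the first `i` variables of a polynomial in `ℚ[z_1,…,z_n]`
at a point `b ∈ ℂ^i`, landing in `ℂ[z_{i+1},…,z_n]`. -/
noncomputable def spec2 (n i : ℕ) (b : Fin i → ℂ) :
    MvPolynomial (Fin n) ℚ →ₐ[ℚ] MvPolynomial {j : Fin n // i ≤ (j : ℕ)} ℂ :=
  MvPolynomial.aeval (fun j : Fin n =>
    if h : (j : ℕ) < i then MvPolynomial.C (b ⟨j, h⟩)
    else MvPolynomial.X ⟨j, Nat.le_of_not_lt h⟩)

/-- If the elimination ideal `⟨h⟩ ∩ ℚ[z_1,…,z_{i+1}]` is principal, generated by `q`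
with `deg(q, z_{i+1}) > 0`, and `√⟨q⟩ = ⟨g⟩`, then for every `b ∈ ℂ^i` the vanishing
sets of `q(b)` and `g(b)` coincide and `√⟨q(b)⟩ = √⟨g(b)⟩`. -/
theorem stmt_2 (n i : ℕ) (hi1 : 1 ≤ i) (hin : i < n)
    (h : Finset (MvPolynomial (Fin n) ℚ))
    (q g : MvPolynomial (Fin n) ℚ)
    (hq_supp : q ∈ MvPolynomial.supported ℚ {j : Fin n | (j : ℕ) ≤ i})
    (helim : ∀ r : MvPolynomial (Fin n) ℚ,
      (r ∈ Ideal.span (h : Set (MvPolynomial (Fin n) ℚ)) ∧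
        r ∈ MvPolynomial.supported ℚ {j : Fin n | (j : ℕ) ≤ i}) ↔
        r ∈ Ideal.span {q})
    (hdeg : 0 < MvPolynomial.degreeOf (⟨i, hin⟩ : Fin n) q)
    (hrad : (Ideal.span {q}).radical = Ideal.span {g}) :
    ∀ b : Fin i → ℂ,
      {y : {j : Fin n // i ≤ (j : ℕ)} → ℂ | MvPolynomial.eval y (spec2 n i b q) = 0}
        = {y : {j : Fin n // i ≤ (j : ℕ)} → ℂ | MvPolynomial.eval y (spec2 n i b g) = 0} ∧
      (Ideal.span {spec2 n i b q}).radical = (Ideal.span {spec2 n i b g}).radical := by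
  -- g ∈ √⟨q⟩, so q ∣ g^m for some m
  have hgq : g ∈ (Ideal.span {q}).radical := by
    rw [hrad]; exact Ideal.subset_span rfl
  obtain ⟨m, hm⟩ := hgq
  rw [Ideal.mem_span_singleton] at hm
  -- q ∈ ⟨g⟩, so g ∣ q
  have hqg : q ∈ Ideal.span {g} := by
    rw [← hrad]; exact Ideal.le_radical (Ideal.subset_span rfl)
  rw [Ideal.mem_span_singleton] at hqg
  intro b
  set φ := spec2 n i b with hφ
  have hd1 : φ q ∣ (φ g) ^ m := by
    rw [← map_pow]; exact map_dvd φ hm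
  have hd2 : φ g ∣ φ q := map_dvd φ hqg
  constructor
  · ext y
    simp only [Set.mem_setOf_eq]
    constructor
    · intro hy
      obtain ⟨c, hc⟩ := hd1
      have : (MvPolynomial.eval y (φ g)) ^ m = 0 := by
        rw [← map_pow, hc, map_mul, hy, zero_mul]
      exact (pow_eq_zero_iff' (M₀ := ℂ)).mp this |>.1
    · intro hy
      obtain ⟨c, hc⟩ := hd2
      rw [hc, map_mul, hy, zero_mul]
  · apply le_antisymm
    · rw [Ideal.radical_le_radical_iff, Ideal.span_le, Set.singleton_subset_iff]
      exact Ideal.le_radical (Ideal.mem_span_singleton.mpr hd2)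
    · rw [Ideal.radical_le_radical_iff, Ideal.span_le, Set.singleton_subset_iff]
      exact ⟨m, Ideal.mem_span_singleton.mpr hd1⟩
end

section
/- The discriminant with respect to p_0 of the polynomial E(u, p_0) = 10·S²·p_0³ − (43u_0 + 20u_1 + 15u_2 + 8u_3)·S·p_0² + 2u_0(29u_0 + 23u_1 + 21u_2 + 14u_3)·p_0 − 24u_0², where S = u_0 + u_1 + u_2 + u_3, is divisible by S² in ℚ[u_0,u_1,u_2,u_3]. -/
open MvPolynomial

/-- The discriminant (w.r.t. `p₀`) of the elimination-ideal generator of the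
four-sided die model is divisible by `S² = (u₀+u₁+u₂+u₃)²`. -/
theorem stmt_5 :
    let u0 : MvPolynomial (Fin 4) ℚ := X 0
    let u1 : MvPolynomial (Fin 4) ℚ := X 1
    let u2 : MvPolynomial (Fin 4) ℚ := X 2
    let u3 : MvPolynomial (Fin 4) ℚ := X 3
    let S := u0 + u1 + u2 + u3
    let a := 10 * S ^ 2
    let b := -(43 * u0 + 20 * u1 + 15 * u2 + 8 * u3) * S
    let c := 2 * u0 * (29 * u0 + 23 * u1 + 21 * u2 + 14 * u3)
    let d := -(24 * u0 ^ 2)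
    S ^ 2 ∣ b ^ 2 * c ^ 2 - 4 * a * c ^ 3 - 4 * b ^ 3 * d - 27 * a ^ 2 * d ^ 2
        + 18 * a * b * c * d := by
  intro u0 u1 u2 u3 S a b c d
  refine ⟨(43 * u0 + 20 * u1 + 15 * u2 + 8 * u3) ^ 2 * c ^ 2 - 40 * c ^ 3
      + 4 * (43 * u0 + 20 * u1 + 15 * u2 + 8 * u3) ^ 3 * S * d
      - 2700 * S ^ 2 * d ^ 2
      - 180 * (43 * u0 + 20 * u1 + 15 * u2 + 8 * u3) * S * c * d, ?_⟩
  show _ = _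
  simp only [S, a, b, c, d]
  ring
end

section
/- Let E ∈ ℚ[u_0,…,u_n][p_0] be a polynomial of degree N in p_0, S = u_0 + ⋯ + u_n, and suppose there exist an integer t > 0, ℓ ∈ {0,1}, and C ∈ ℚ[u_0,…,u_n] ∖ ⟨S⟩ such that S^{t−ℓ}·C·E = Σ_{k=0}^N H_k(u)·S^k·p_0^k for polynomials H_k ∈ ℚ[u]. Then for each k with k > t − ℓ, the coefficient of p_0^k in E is divisible by S^{k−t+ℓ}, provided each H_k/C is a polynomial. -/
/-- Divisibility pattern of the coefficients of the elimination-ideal generator `E`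
by the sum of data variables `S`: if `S^{t-ℓ}·C·E = Σ_k H_k·S^k·p₀^k` with
`C ∉ ⟨S⟩` and each `H_k/C` a polynomial, then for `k > t-ℓ` the coefficient of
`p₀^k` in `E` is divisible by `S^{k-(t-ℓ)}`. -/
theorem stmt_14 (n N : ℕ)
    (E : Polynomial (MvPolynomial (Fin (n + 1)) ℚ))
    (hE : E.natDegree = N)
    (S : MvPolynomial (Fin (n + 1)) ℚ) (hS : S = ∑ k : Fin (n + 1), MvPolynomial.X k)
    (t ℓ : ℕ) (ht : 0 < t) (hℓ : ℓ = 0 ∨ ℓ = 1)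
    (C : MvPolynomial (Fin (n + 1)) ℚ) (hC : C ∉ Ideal.span {S})
    (H : Fin (N + 1) → MvPolynomial (Fin (n + 1)) ℚ)
    (heq : Polynomial.C (S ^ (t - ℓ) * C) * E =
      ∑ k : Fin (N + 1), Polynomial.C (H k * S ^ k.val) * Polynomial.X ^ k.val)
    (hdvd : ∀ k, C ∣ H k) :
    ∀ k : ℕ, t - ℓ < k → S ^ (k - (t - ℓ)) ∣ E.coeff k := by
  intro k hk
  have hC0 : C ≠ 0 := by
    rintro rfl; exact hC (Ideal.zero_mem _)
  have hS0 : S ≠ 0 := by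
    intro h
    have := congrArg (MvPolynomial.eval (fun _ => (1 : ℚ))) h
    simp [hS] at this
    exact Nat.cast_add_one_ne_zero n this
  by_cases hkN : k ≤ N
  · have hco := congrArg (fun P => Polynomial.coeff P k) heq
    simp only [Polynomial.coeff_C_mul, Polynomial.finset_sum_coeff,
      Polynomial.coeff_X_pow, mul_ite, mul_one, mul_zero] at hco
    have hsum : (∑ j : Fin (N + 1), if k = j.val then H j * S ^ j.val else 0)
        = H ⟨k, Nat.lt_succ_of_le hkN⟩ * S ^ k := by
      rw [Finset.sum_eq_single (⟨k, Nat.lt_succ_of_le hkN⟩ : Fin (N + 1))]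
      · simp
      · intro b _ hb
        have : k ≠ b.val := fun h => hb (by ext; simp [h])
        simp [this]
      · simp
    rw [hsum] at hco
    obtain ⟨G, hG⟩ := hdvd ⟨k, Nat.lt_succ_of_le hkN⟩
    rw [hG] at hco
    -- hco : S ^ (t - ℓ) * C * E.coeff k = C * G * S ^ k
    have hpow : S ^ k = S ^ (t - ℓ) * S ^ (k - (t - ℓ)) := by
      rw [← pow_add]; congr 1; omega
    rw [hpow] at hco
    have hcancel : C * (S ^ (t - ℓ) * E.coeff k) = C * (S ^ (t - ℓ) * (G * S ^ (k - (t - ℓ)))) := by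
      ring_nf; ring_nf at hco; linear_combination hco
    have h1 := mul_left_cancel₀ hC0 hcancel
    have h2 := mul_left_cancel₀ (pow_ne_zero _ hS0) h1
    exact ⟨G, by rw [h2]; ring⟩
  · have : E.coeff k = 0 := Polynomial.coeff_eq_zero_of_natDegree_lt (by omega)
    simp [this]
end

section
/- Let f_0 = p_0λ_1 + p_0λ_2 − u_0, f_1 = p_1λ_1 + 2p_1λ_2 − u_1, f_2 = p_2λ_1 + 3p_2λ_2 − u_2, f_3 = p_3λ_1 − 4p_3λ_2 − u_3, f_4 = p_0 + 2p_1 + 3p_2 − 4p_3, f_5 = p_0 + p_1 + p_2 + p_3 − 1. Then the polynomial E = 10S²p_0³ − (43u_0+20u_1+15u_2+8u_3)S p_0² + 2u_0(29u_0+23u_1+21u_2+14u_3)p_0 − 24u_0², with S = u_0+u_1+u_2+u_3, vanishes at every common complex zero of f_0,…,f_5. -/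
/-- The polynomial `E` vanishes at every common complex zero of the Lagrange
likelihood equations of the four-sided die model. -/
theorem stmt_17 (u0 u1 u2 u3 p0 p1 p2 p3 l1 l2 : ℂ)
    (h0 : p0 * l1 + p0 * l2 - u0 = 0)
    (h1 : p1 * l1 + 2 * p1 * l2 - u1 = 0)
    (h2 : p2 * l1 + 3 * p2 * l2 - u2 = 0)
    (h3 : p3 * l1 - 4 * p3 * l2 - u3 = 0)
    (h4 : p0 + 2 * p1 + 3 * p2 - 4 * p3 = 0)
    (h5 : p0 + p1 + p2 + p3 - 1 = 0) :
    let S := u0 + u1 + u2 + u3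
    10 * S ^ 2 * p0 ^ 3 - (43 * u0 + 20 * u1 + 15 * u2 + 8 * u3) * S * p0 ^ 2
      + 2 * u0 * (29 * u0 + 23 * u1 + 21 * u2 + 14 * u3) * p0 - 24 * u0 ^ 2 = 0 := by
  intro S
  have e0 : u0 = p0 * l1 + p0 * l2 := by linear_combination -h0
  have e1 : u1 = p1 * l1 + 2 * p1 * l2 := by linear_combination -h1
  have e2 : u2 = p2 * l1 + 3 * p2 * l2 := by linear_combination -h2
  have e3 : u3 = p3 * l1 - 4 * p3 * l2 := by linear_combination -h3
  subst e0 e1 e2 e3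
  simp only [S]
  linear_combination
    (66*p0^2*l2^2 + 17*p0^2*l1*l2 + p0^2*l1^2 - 77*p0^2*p2*l2^2 - 7*p0^2*p2*l1*l2
      - 72*p0^2*p1*l2^2 - 12*p0^2*p1*l1*l2 - 115*p0^3*l2^2 - 15*p0^3*l1*l2
      + 70*p0^3*p2*l2^2 + 60*p0^3*p1*l2^2 + 50*p0^4*l2^2) * h4 +
    (24*p0^2*l2^2 + 48*p0^2*l1*l2 + 24*p0^2*l1^2 - 128*p0^2*p3*l2^2 + 64*p0^2*p3*l1*l2
      - 8*p0^2*p3*l1^2 + 96*p0^2*p2*l2^2 - 69*p0^2*p2*l1*l2 - 15*p0^2*p2*l1^2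
      + 64*p0^2*p1*l2^2 - 56*p0^2*p1*l1*l2 - 20*p0^2*p1*l1^2 + 32*p0^3*l2^2
      - 51*p0^3*l1*l2 - 33*p0^3*l1^2 + 160*p0^3*p3*l2^2 - 80*p0^3*p3*l1*l2
      + 10*p0^3*p3*l1^2 - 120*p0^3*p2*l2^2 + 60*p0^3*p2*l1*l2 + 10*p0^3*p2*l1^2
      - 80*p0^3*p1*l2^2 + 40*p0^3*p1*l1*l2 + 10*p0^3*p1*l1^2 - 40*p0^4*l2^2
      + 20*p0^4*l1*l2 + 10*p0^4*l1^2) * h5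
end
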